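/- arXiv:2007.15426 — 4 statements merged into one kernel-verified Lean document; each statement's English description precedes it below -/
import Mathlib

section
/- For every T > 0, β ∈ (0,1), there is a constant C = C(T, β, d) > 0 such that for all 0 < t ≤ T and x₁, x₂ ∈ R^d, |g(t,x₁) − g(t,x₂)| ≤ C |x₁ − x₂|^β t^{−β} (g(4t, x₁) + g(4t, x₂)). -/
set_option maxHeartbeats 1000000
open Real MeasureTheory

theorem helper1 (a b : ℝ) (hab : a ≤ b) : |Real.exp (-a) - Real.exp (-b)| ≤ (b - a) * Real.exp (-a) := by
  rw [abs_of_nonneg (sub_nonneg.mpr (Real.exp_le_exp.mpr (by linarith)))]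
  have he : Real.exp (-b) = Real.exp (-a) * Real.exp (a - b) := by
    rw [← Real.exp_add]; ring_nf
  have h := Real.add_one_le_exp (a - b)
  nlinarith [Real.exp_pos (-a), mul_le_mul_of_nonneg_left h (Real.exp_pos (-a)).le]

theorem helper2 (t n : ℝ) (ht : 0 < t) :
    n * Real.sqrt t ≤ 2 * t * Real.exp (3 * n ^ 2 / (16 * t)) := by
  have hs : Real.sqrt t ^ 2 = t := Real.sq_sqrt ht.le
  have h := Real.add_one_le_exp (3 * n ^ 2 / (16 * t))
  have h2 : 2 * t * (3 * n ^ 2 / (16 * t) + 1) = 3 * n ^ 2 / 8 + 2 * t := by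
    field_simp; ring
  nlinarith [sq_nonneg (3 * n - 4 * Real.sqrt t), Real.sqrt_nonneg t,
    mul_le_mul_of_nonneg_left h (by linarith : (0:ℝ) ≤ 2 * t)]

theorem core (t T β n1 n2 r A : ℝ) (ht : 0 < t) (htT : t ≤ T) (hβ0 : 0 < β) (hβ1 : β < 1)
    (hn1 : 0 ≤ n1) (h12 : n1 ≤ n2) (hr2 : n2 - n1 ≤ r) (hA : 0 ≤ A) :
    A * |Real.exp (-n1 ^ 2 / (4 * t)) - Real.exp (-n2 ^ 2 / (4 * t))| ≤
      2 * T ^ (β / 2) * r ^ β * t ^ (-β) *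
        (A * Real.exp (-n1 ^ 2 / (16 * t)) + A * Real.exp (-n2 ^ 2 / (16 * t))) := by
  have hT : 0 < T := lt_of_lt_of_le ht htT
  have hn2 : 0 ≤ n2 := le_trans hn1 h12
  have hr0 : 0 ≤ r := le_trans (by linarith) hr2
  set a : ℝ := n1 ^ 2 / (4 * t) with ha
  set b : ℝ := n2 ^ 2 / (4 * t) with hb
  have ha0 : 0 ≤ a := by positivity
  have hb0 : 0 ≤ b := by positivity
  have hab : a ≤ b := by rw [ha, hb]; gcongr
  have e1 : -n1 ^ 2 / (4 * t) = -a := by rw [ha]; ring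
  have e2 : -n2 ^ 2 / (4 * t) = -b := by rw [hb]; ring
  have e3 : -n1 ^ 2 / (16 * t) = -(a / 4) := by rw [ha]; ring
  have e4 : -n2 ^ 2 / (16 * t) = -(b / 4) := by rw [hb]; ring
  rw [e1, e2, e3, e4]
  have hpow : t ^ (β / 2) * t ^ (-β) = t ^ (-(β / 2)) := by
    rw [← Real.rpow_add ht]; ring_nf
  have htT2 : t ^ (β / 2) ≤ T ^ (β / 2) := Real.rpow_le_rpow ht.le htT (by positivity)
  have hTpos : (0:ℝ) < T ^ (β / 2) := Real.rpow_pos_of_pos hT _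
  have htneg : (0:ℝ) < t ^ (-β) := Real.rpow_pos_of_pos ht _
  rcases eq_or_lt_of_le hr0 with hr | hr
  · -- r = 0 : then n1 = n2
    have hn : n2 = n1 := le_antisymm (by linarith) h12
    have hba : b = a := by rw [hb, ha, hn]
    rw [← hr, Real.zero_rpow hβ0.ne', hba]
    simp
  · -- r > 0
    set s : ℝ := Real.sqrt t with hsdef
    have hs0 : 0 < s := Real.sqrt_pos.mpr ht
    have hts : s ^ 2 = t := Real.sq_sqrt ht.le
    have hsβ : s ^ (β : ℝ) = t ^ (β / 2) := by
      rw [hsdef, Real.sqrt_eq_rpow, ← Real.rpow_mul ht.le]; ring_nf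
    -- step 1
    have step1 : |Real.exp (-a) - Real.exp (-b)| ≤ (b - a) * Real.exp (-a) := helper1 a b hab
    have hba : b - a ≤ (2 * n1 * r + r ^ 2) / (4 * t) := by
      rw [hb, ha, div_sub_div_same]
      apply div_le_div_of_nonneg_right ?h (by positivity)
      case h => nlinarith
    rcases le_total r s with hrs | hsr
    · -- small increment case
      have hexp : Real.exp (3 * n1 ^ 2 / (16 * t)) * Real.exp (-a) = Real.exp (-(a / 4)) := by
        rw [← Real.exp_add]; congr 1; rw [ha]; ring
      have key1 : n1 * Real.exp (-a) * s ≤ 2 * t * Real.exp (-(a / 4)) := by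
        calc n1 * Real.exp (-a) * s = (n1 * s) * Real.exp (-a) := by ring
          _ ≤ (2 * t * Real.exp (3 * n1 ^ 2 / (16 * t))) * Real.exp (-a) :=
              mul_le_mul_of_nonneg_right (helper2 t n1 ht) (Real.exp_pos _).le
          _ = 2 * t * Real.exp (-(a / 4)) := by rw [mul_assoc, hexp]
      have key1' : n1 * Real.exp (-a) ≤ 2 * s * Real.exp (-(a / 4)) := by
        rw [← hts] at key1
        nlinarith [Real.exp_pos (-(a/4)), Real.exp_pos (-a), hs0, key1]
      have key2 : r * Real.exp (-a) ≤ s * Real.exp (-(a / 4)) :=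
        mul_le_mul hrs (Real.exp_le_exp.mpr (by linarith)) (Real.exp_pos _).le hs0.le
      -- combine: (b-a) exp(-a) ≤ 2 (r/s) exp(-a/4)
      have comb : (b - a) * Real.exp (-a) ≤ 2 * (r / s) * Real.exp (-(a / 4)) := by
        have h1 : (b - a) * Real.exp (-a) ≤ ((2 * n1 * r + r ^ 2) / (4 * t)) * Real.exp (-a) :=
          mul_le_mul_of_nonneg_right hba (Real.exp_pos _).le
        have h2 : ((2 * n1 * r + r ^ 2) / (4 * t)) * Real.exp (-a)
            = (r / (4 * s ^ 2)) * (2 * (n1 * Real.exp (-a)) + r * Real.exp (-a)) := by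
          rw [hts]; ring
        have h3 : (r / (4 * s ^ 2)) * (2 * (n1 * Real.exp (-a)) + r * Real.exp (-a))
            ≤ (r / (4 * s ^ 2)) * (2 * (2 * s * Real.exp (-(a/4))) + s * Real.exp (-(a/4))) := by
          apply mul_le_mul_of_nonneg_left (by linarith) (by positivity)
        have h4 : (r / (4 * s ^ 2)) * (2 * (2 * s * Real.exp (-(a/4))) + s * Real.exp (-(a/4)))
            = (5 / 4) * (r / s) * Real.exp (-(a/4)) := by
          field_simp; ring
        have h5 : (5 / 4 : ℝ) * (r / s) * Real.exp (-(a/4)) ≤ 2 * (r / s) * Real.exp (-(a/4)) := by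
          have : (0:ℝ) ≤ (r / s) * Real.exp (-(a/4)) := by positivity
          nlinarith
        linarith [h1, h3.trans_eq h4 |>.trans h5, h2 ▸ h1]
      -- power factor bound : r / s ≤ T^(β/2) * r^β * t^(-β)
      have hfac : r / s ≤ T ^ (β / 2) * (r ^ β * t ^ (-β)) := by
        have h1 : r / s ≤ (r / s) ^ (β : ℝ) := by
          have hx : 0 < r / s := by positivity
          have hx1 : r / s ≤ 1 := (div_le_one hs0).mpr hrs
          calc r / s = (r / s) ^ (1 : ℝ) := (Real.rpow_one _).symm
            _ ≤ (r / s) ^ (β : ℝ) := Real.rpow_le_rpow_of_exponent_ge hx hx1 hβ1.le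
        have h2 : (r / s) ^ (β : ℝ) = r ^ β / t ^ (β / 2) := by
          rw [Real.div_rpow hr0 hs0.le, hsβ]
        have h3 : r ^ β / t ^ (β / 2) = r ^ β * (t ^ (-(β/2))) := by
          rw [Real.rpow_neg ht.le, div_eq_mul_inv]
        have h4 : r ^ β * t ^ (-(β/2)) = r ^ β * (t ^ (β/2) * t ^ (-β)) := by rw [hpow]
        have h5 : r ^ β * (t ^ (β/2) * t ^ (-β)) ≤ r ^ β * (T ^ (β/2) * t ^ (-β)) := by
          have hrβ : (0:ℝ) ≤ r ^ β := (Real.rpow_pos_of_pos hr β).le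
          apply mul_le_mul_of_nonneg_left (by nlinarith) hrβ
        calc r / s ≤ (r / s) ^ (β:ℝ) := h1
          _ = r ^ β / t ^ (β/2) := h2
          _ = r ^ β * t ^ (-(β/2)) := h3
          _ = r ^ β * (t ^ (β/2) * t ^ (-β)) := h4
          _ ≤ r ^ β * (T ^ (β/2) * t ^ (-β)) := h5
          _ = T ^ (β/2) * (r ^ β * t ^ (-β)) := by ring
      -- final assembly
      have expb : (0:ℝ) ≤ A * Real.exp (-(b/4)) := by positivity
      have expa : (0:ℝ) < Real.exp (-(a/4)) := Real.exp_pos _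
      calc A * |Real.exp (-a) - Real.exp (-b)|
          ≤ A * ((b - a) * Real.exp (-a)) := mul_le_mul_of_nonneg_left step1 hA
        _ ≤ A * (2 * (r / s) * Real.exp (-(a/4))) := mul_le_mul_of_nonneg_left comb hA
        _ ≤ A * (2 * (T ^ (β/2) * (r ^ β * t ^ (-β))) * Real.exp (-(a/4))) := by
            apply mul_le_mul_of_nonneg_left ?_ hA
            apply mul_le_mul_of_nonneg_right ?_ expa.le
            nlinarith [hfac]
        _ = 2 * T ^ (β/2) * r ^ β * t ^ (-β) * (A * Real.exp (-(a/4))) := by ring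
        _ ≤ 2 * T ^ (β/2) * r ^ β * t ^ (-β) * (A * Real.exp (-(a/4)) + A * Real.exp (-(b/4))) := by
            have hrβ : (0:ℝ) ≤ r ^ β := (Real.rpow_pos_of_pos hr β).le
            have hc : (0:ℝ) ≤ 2 * T ^ (β/2) * r ^ β * t ^ (-β) := by positivity
            nlinarith [mul_nonneg hc expb]
    · -- large increment case
      have htriv : |Real.exp (-a) - Real.exp (-b)| ≤ Real.exp (-(a/4)) + Real.exp (-(b/4)) := by
        have h1 : Real.exp (-a) ≤ Real.exp (-(a/4)) := Real.exp_le_exp.mpr (by linarith)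
        have h2 : Real.exp (-b) ≤ Real.exp (-(b/4)) := Real.exp_le_exp.mpr (by linarith)
        rw [abs_le]
        constructor <;> nlinarith [Real.exp_pos (-a), Real.exp_pos (-b),
          Real.exp_pos (-(a/4)), Real.exp_pos (-(b/4))]
      have hfac2 : (1:ℝ) ≤ 2 * T ^ (β/2) * r ^ β * t ^ (-β) := by
        have h1 : t ^ (β/2) ≤ r ^ β := by
          rw [← hsβ]
          exact Real.rpow_le_rpow hs0.le hsr hβ0.le
        have h2 : T ^ (-(β/2)) ≤ t ^ (-(β/2)) :=
          Real.rpow_le_rpow_of_nonpos ht htT (by linarith)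
        have h3 : T ^ (β/2) * T ^ (-(β/2)) = 1 := by
          rw [← Real.rpow_add hT]; simp
        have c1 : t ^ (-(β/2)) ≤ r ^ β * t ^ (-β) := by
          rw [← hpow]; exact mul_le_mul_of_nonneg_right h1 htneg.le
        have c2 : T ^ (-(β/2)) ≤ r ^ β * t ^ (-β) := le_trans h2 c1
        have c3 : 2 * T ^ (β/2) * T ^ (-(β/2)) ≤ 2 * T ^ (β/2) * (r ^ β * t ^ (-β)) :=
          mul_le_mul_of_nonneg_left c2 (by positivity)
        have c4 : 2 * T ^ (β/2) * T ^ (-(β/2)) = 2 := by rw [mul_assoc, h3, mul_one]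
        have c5 : 2 * T ^ (β/2) * r ^ β * t ^ (-β) = 2 * T ^ (β/2) * (r ^ β * t ^ (-β)) := by ring
        linarith
      calc A * |Real.exp (-a) - Real.exp (-b)|
          ≤ A * (Real.exp (-(a/4)) + Real.exp (-(b/4))) := mul_le_mul_of_nonneg_left htriv hA
        _ = 1 * (A * Real.exp (-(a/4)) + A * Real.exp (-(b/4))) := by ring
        _ ≤ 2 * T ^ (β/2) * r ^ β * t ^ (-β) * (A * Real.exp (-(a/4)) + A * Real.exp (-(b/4))) := by
            apply mul_le_mul_of_nonneg_right hfac2 (by positivity)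

theorem core_sym (t T β n1 n2 r A : ℝ) (ht : 0 < t) (htT : t ≤ T) (hβ0 : 0 < β) (hβ1 : β < 1)
    (hn1 : 0 ≤ n1) (hn2 : 0 ≤ n2) (hd : |n1 - n2| ≤ r) (hA : 0 ≤ A) :
    A * |Real.exp (-n1 ^ 2 / (4 * t)) - Real.exp (-n2 ^ 2 / (4 * t))| ≤
      2 * T ^ (β / 2) * r ^ β * t ^ (-β) *
        (A * Real.exp (-n1 ^ 2 / (16 * t)) + A * Real.exp (-n2 ^ 2 / (16 * t))) := by
  rcases le_total n1 n2 with h | h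
  · exact core t T β n1 n2 r A ht htT hβ0 hβ1 hn1 h
      (by rw [abs_sub_comm] at hd; exact le_trans (le_abs_self _) hd) hA
  · have key := core t T β n2 n1 r A ht htT hβ0 hβ1 hn2 h
      (le_trans (le_abs_self _) hd) hA
    rw [abs_sub_comm, add_comm (A * Real.exp (-n1 ^ 2 / (16 * t)))]
    exact key

theorem gaussian_holder_space (d : ℕ) (g : ℝ → EuclideanSpace ℝ (Fin d) → ℝ)
    (hg : ∀ t x, g t x = (4 * π * t) ^ (-(d : ℝ) / 2) * Real.exp (-‖x‖ ^ 2 / (4 * t))) :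
    ∀ T : ℝ, 0 < T → ∀ β : ℝ, β ∈ Set.Ioo (0 : ℝ) 1 →
      ∃ C > 0, ∀ t : ℝ, 0 < t → t ≤ T → ∀ x₁ x₂ : EuclideanSpace ℝ (Fin d),
        |g t x₁ - g t x₂| ≤
          C * ‖x₁ - x₂‖ ^ β * t ^ (-β) * (g (4 * t) x₁ + g (4 * t) x₂) := by
  intro T hT β hβ
  obtain ⟨hβ0, hβ1⟩ := hβ
  refine ⟨2 * (4:ℝ) ^ ((d:ℝ) / 2) * T ^ (β / 2), by positivity, ?_⟩
  intro t ht htT x₁ x₂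
  have hπt : (0:ℝ) < 4 * π * t := by positivity
  set A : ℝ := (4 * π * t) ^ (-(d:ℝ) / 2) with hA
  have hA0 : (0:ℝ) ≤ A := (Real.rpow_pos_of_pos hπt _).le
  have hg4 : ∀ x : EuclideanSpace ℝ (Fin d), g (4 * t) x =
      (4:ℝ) ^ (-(d:ℝ) / 2) * (A * Real.exp (-‖x‖ ^ 2 / (16 * t))) := by
    intro x
    rw [hg, show (4 * π * (4 * t)) = 4 * (4 * π * t) by ring,
      Real.mul_rpow (by norm_num) (by positivity),
      show -‖x‖ ^ 2 / (4 * (4 * t)) = -‖x‖ ^ 2 / (16 * t) by ring, hA]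
    ring
  have h44 : (4:ℝ) ^ ((d:ℝ) / 2) * (4:ℝ) ^ (-(d:ℝ) / 2) = 1 := by
    rw [← Real.rpow_add (by norm_num : (0:ℝ) < 4),
      show (d:ℝ) / 2 + -(d:ℝ) / 2 = 0 by ring, Real.rpow_zero]
  have hRHS : 2 * (4:ℝ) ^ ((d:ℝ) / 2) * T ^ (β / 2) * ‖x₁ - x₂‖ ^ β * t ^ (-β) *
      (g (4 * t) x₁ + g (4 * t) x₂)
      = 2 * T ^ (β / 2) * ‖x₁ - x₂‖ ^ β * t ^ (-β) *
        (A * Real.exp (-‖x₁‖ ^ 2 / (16 * t)) + A * Real.exp (-‖x₂‖ ^ 2 / (16 * t))) := by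
    rw [hg4, hg4]
    calc 2 * (4:ℝ) ^ ((d:ℝ) / 2) * T ^ (β / 2) * ‖x₁ - x₂‖ ^ β * t ^ (-β) *
        ((4:ℝ) ^ (-(d:ℝ) / 2) * (A * Real.exp (-‖x₁‖ ^ 2 / (16 * t))) +
         (4:ℝ) ^ (-(d:ℝ) / 2) * (A * Real.exp (-‖x₂‖ ^ 2 / (16 * t))))
        = ((4:ℝ) ^ ((d:ℝ) / 2) * (4:ℝ) ^ (-(d:ℝ) / 2)) *
          (2 * T ^ (β / 2) * ‖x₁ - x₂‖ ^ β * t ^ (-β) *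
            (A * Real.exp (-‖x₁‖ ^ 2 / (16 * t)) + A * Real.exp (-‖x₂‖ ^ 2 / (16 * t)))) := by
          ring
      _ = _ := by rw [h44, one_mul]
  rw [hg, hg, ← hA, ← mul_sub, abs_mul, abs_of_nonneg hA0, hRHS]
  exact core_sym t T β ‖x₁‖ ‖x₂‖ ‖x₁ - x₂‖ A ht htT hβ0 hβ1 (norm_nonneg _) (norm_nonneg _)
    (abs_norm_sub_norm_le x₁ x₂) hA0
end

section
/- For every T > 0 and β ∈ (0,1), there is a constant C = C(T, β, d) > 0 such that for all 0 < t₁ < t₂ ≤ T and x ∈ R^d, |g(t₁,x) − g(t₂,x)| ≤ C |t₂ − t₁|^{β/2} (t₁^{−β/2} g(2t₁, x) + t₂^{−β/2} g(2t₂, x)). -/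
/-
With `u = |x|²/(8t)`, the time derivative of `g(t,x)` is `g(t,x) (2u - d/2)/t`; since
`g(t,x) = 2^{d/2} g(2t,x) e^{-u}` and `u e^{-u} ≤ 1`, it is at most `2^{d/2} (d/2 + 2) g(2t,x)/t`.
Also `g(s,x) ≤ 2^{d/2} g(t,x)` whenever `s ≤ t ≤ 2s`. If `t₂ ≤ 2t₁`, the mean value theorem on
`[t₁, t₂]` bounds the difference by a multiple of `((t₂ - t₁)/t₂) g(2t₂,x)`, and
`r ≤ r^{β/2}` for `r ≤ 1`. If `2t₁ ≤ t₂`, both ratios `(t₂ - t₁)/tᵢ` are at least `1/2`, so the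
crude bound `g(t₁,x) + g(t₂,x) ≤ 2^{d/2} (g(2t₁,x) + g(2t₂,x))` suffices.
-/

open Real

noncomputable def heatKernel {E : Type*} [Norm E] (d : ℕ) (t : ℝ) (x : E) : ℝ :=
  (4 * π * t) ^ (-(d : ℝ) / 2) * exp (-‖x‖ ^ 2 / (4 * t))

section heatKernel

variable {E : Type*} [Norm E] {d : ℕ} {x : E} {s t : ℝ}

lemma heatKernel_nonneg (ht : 0 ≤ t) : 0 ≤ heatKernel d t x := by
  unfold heatKernel; positivity

lemma four_pi_mul_rpow_eq (ht : 0 ≤ t) :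
    (4 * π * t) ^ (-(d : ℝ) / 2) = 2 ^ ((d : ℝ) / 2) * (4 * π * (2 * t)) ^ (-(d : ℝ) / 2) := by
  rw [show 4 * π * (2 * t) = 2 * (4 * π * t) by ring, mul_rpow zero_le_two (by positivity),
    ← mul_assoc, ← rpow_add two_pos, show (d : ℝ) / 2 + -(d : ℝ) / 2 = 0 by ring, rpow_zero,
    one_mul]

lemma heatKernel_le_of_le_of_le_two_mul (hs : 0 < s) (hst : s ≤ t) (hts : t ≤ 2 * s) :
    heatKernel d s x ≤ 2 ^ ((d : ℝ) / 2) * heatKernel d t x := by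
  have ht : 0 < t := by linarith
  have hprefactor :
      (4 * π * s) ^ (-(d : ℝ) / 2) ≤ 2 ^ ((d : ℝ) / 2) * (4 * π * t) ^ (-(d : ℝ) / 2) :=
    calc (4 * π * s) ^ (-(d : ℝ) / 2) ≤ (4 * π * (t / 2)) ^ (-(d : ℝ) / 2) :=
          rpow_le_rpow_of_nonpos (by positivity) (by gcongr; linarith)
            (by linarith [d.cast_nonneg (α := ℝ)])
      _ = 2 ^ ((d : ℝ) / 2) * (4 * π * t) ^ (-(d : ℝ) / 2) := by
          rw [four_pi_mul_rpow_eq (by linarith), mul_div_cancel₀ t two_ne_zero]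
  have hexp : exp (-‖x‖ ^ 2 / (4 * s)) ≤ exp (-‖x‖ ^ 2 / (4 * t)) := by
    rw [exp_le_exp, neg_div, neg_div, neg_le_neg_iff]
    gcongr
  unfold heatKernel
  rw [← mul_assoc]
  gcongr

lemma hasDerivAt_heatKernel (ht : 0 < t) :
    HasDerivAt (fun s ↦ heatKernel d s x)
      (heatKernel d t x * (‖x‖ ^ 2 / (4 * t ^ 2) - d / (2 * t))) t := by
  have hprefactor : HasDerivAt (fun s ↦ (4 * π * s) ^ (-(d : ℝ) / 2))
      (4 * π * (-(d : ℝ) / 2) * (4 * π * t) ^ (-(d : ℝ) / 2 - 1)) t := by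
    simpa using ((hasDerivAt_id t).const_mul (4 * π)).rpow_const (Or.inl (by positivity))
  have hexp : HasDerivAt (fun s ↦ exp (-‖x‖ ^ 2 / (4 * s)))
      (exp (-‖x‖ ^ 2 / (4 * t)) * (‖x‖ ^ 2 / (4 * t ^ 2))) t := by
    have := ((hasDerivAt_inv ht.ne').const_mul (-‖x‖ ^ 2 / 4)).exp
    convert this using 1
    · ext s; congr 1; field_simp
    · congr 1 <;> field_simp
  refine (hprefactor.mul hexp).congr_deriv ?_
  rw [rpow_sub (by positivity), rpow_one]
  unfold heatKernel
  field_simp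
  ring

lemma heatKernel_eq_mul_heatKernel_two_mul (ht : 0 < t) :
    heatKernel d t x =
      2 ^ ((d : ℝ) / 2) * heatKernel d (2 * t) x * exp (-(‖x‖ ^ 2 / (8 * t))) := by
  unfold heatKernel
  have hsplit : -‖x‖ ^ 2 / (4 * t) = -‖x‖ ^ 2 / (4 * (2 * t)) + -(‖x‖ ^ 2 / (8 * t)) := by
    field_simp; ring
  rw [four_pi_mul_rpow_eq ht.le, hsplit, exp_add]
  ring

lemma abs_deriv_heatKernel_le (ht : 0 < t) :
    |deriv (fun s ↦ heatKernel d s x) t| ≤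
      2 ^ ((d : ℝ) / 2) * ((d / 2 + 2) / t) * heatKernel d (2 * t) x := by
  set u := ‖x‖ ^ 2 / (8 * t)
  have hu : 0 ≤ u := by positivity
  have hd : (0 : ℝ) ≤ d / 2 := by positivity
  have hG : 0 ≤ heatKernel d (2 * t) x := heatKernel_nonneg (by positivity)
  have hdecay : exp (-u) * |2 * u - d / 2| ≤ d / 2 + 2 := by
    have h₁ := mul_exp_neg_le_exp_neg_one u
    have h₂ : exp (-1) ≤ 1 := exp_le_one_iff.mpr (by norm_num)
    have h₃ : exp (-u) ≤ 1 := exp_le_one_iff.mpr (by linarith)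
    calc exp (-u) * |2 * u - d / 2| ≤ exp (-u) * (2 * u + d / 2) := by
          gcongr
          exact abs_sub_le_of_nonneg_of_le (by positivity) (by linarith) hd (by linarith)
      _ ≤ d / 2 + 2 := by nlinarith [exp_pos (-u)]
  have hrate : ‖x‖ ^ 2 / (4 * t ^ 2) - d / (2 * t) = (2 * u - d / 2) / t := by
    simp only [u]; field_simp; ring
  rw [(hasDerivAt_heatKernel ht).deriv, heatKernel_eq_mul_heatKernel_two_mul ht, hrate, abs_mul,
    abs_div, abs_of_pos ht, abs_of_nonneg (by positivity)]
  calc 2 ^ ((d : ℝ) / 2) * heatKernel d (2 * t) x * exp (-u) * (|2 * u - d / 2| / t)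
      = 2 ^ ((d : ℝ) / 2) * heatKernel d (2 * t) x * (exp (-u) * |2 * u - d / 2|) / t := by ring
    _ ≤ 2 ^ ((d : ℝ) / 2) * heatKernel d (2 * t) x * (d / 2 + 2) / t := by gcongr
    _ = 2 ^ ((d : ℝ) / 2) * ((d / 2 + 2) / t) * heatKernel d (2 * t) x := by ring

lemma abs_heatKernel_sub_le_of_le_two_mul {t₁ t₂ : ℝ} (ht₁ : 0 < t₁) (h₁₂ : t₁ ≤ t₂)
    (h₂₁ : t₂ ≤ 2 * t₁) :
    |heatKernel d t₁ x - heatKernel d t₂ x| ≤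
      (2 ^ ((d : ℝ) / 2)) ^ 2 * (d + 4) * ((t₂ - t₁) / t₂) * heatKernel d (2 * t₂) x := by
  have ht₂ : 0 < t₂ := by linarith
  have hderiv_le : ∀ s ∈ Set.Ico t₁ t₂,
      ‖deriv (fun s ↦ heatKernel d s x) s‖ ≤
        (2 ^ ((d : ℝ) / 2)) ^ 2 * (d + 4) / t₂ * heatKernel d (2 * t₂) x := by
    rintro s ⟨hs₁, hs₂⟩
    have hs : 0 < s := by linarith
    have hrate : ((d : ℝ) / 2 + 2) / s ≤ ((d : ℝ) / 2 + 2) * 2 / t₂ := by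
      rw [div_le_div_iff₀ hs ht₂, mul_assoc]
      gcongr
      linarith
    have hcompare : heatKernel d (2 * s) x ≤ 2 ^ ((d : ℝ) / 2) * heatKernel d (2 * t₂) x :=
      heatKernel_le_of_le_of_le_two_mul (by positivity) (by linarith) (by linarith)
    calc _ ≤ 2 ^ ((d : ℝ) / 2) * ((d / 2 + 2) / s) * heatKernel d (2 * s) x :=
          abs_deriv_heatKernel_le hs
      _ ≤ 2 ^ ((d : ℝ) / 2) * (((d : ℝ) / 2 + 2) * 2 / t₂) *
            (2 ^ ((d : ℝ) / 2) * heatKernel d (2 * t₂) x) := by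
          have := heatKernel_nonneg (d := d) (x := x) (by positivity : 0 ≤ 2 * s)
          gcongr
      _ = _ := by ring
  have hmvt := norm_image_sub_le_of_norm_deriv_le_segment'
    (fun s hs ↦ (hasDerivAt_heatKernel (by linarith [hs.1] : 0 < s)).differentiableAt
      |>.hasDerivAt.hasDerivWithinAt) hderiv_le t₂ ⟨h₁₂, le_rfl⟩
  rw [abs_sub_comm, ← Real.norm_eq_abs]
  exact hmvt.trans_eq (by field_simp)

lemma abs_heatKernel_sub_le_add {t₁ t₂ : ℝ} (ht₁ : 0 < t₁) (ht₂ : 0 < t₂) :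
    |heatKernel d t₁ x - heatKernel d t₂ x| ≤
      2 ^ ((d : ℝ) / 2) * (heatKernel d (2 * t₁) x + heatKernel d (2 * t₂) x) := by
  have h₁ := heatKernel_le_of_le_of_le_two_mul (d := d) (x := x) ht₁ (by linarith) le_rfl
  have h₂ := heatKernel_le_of_le_of_le_two_mul (d := d) (x := x) ht₂ (by linarith) le_rfl
  rw [abs_sub_le_iff]
  constructor <;> nlinarith [heatKernel_nonneg (d := d) (x := x) ht₁.le,
    heatKernel_nonneg (d := d) (x := x) ht₂.le]

lemma abs_heatKernel_sub_le_rpow {γ t₁ t₂ : ℝ} (hγ₀ : 0 ≤ γ) (hγ₁ : γ ≤ 1) (ht₁ : 0 < t₁)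
    (h₁₂ : t₁ ≤ t₂) :
    |heatKernel d t₁ x - heatKernel d t₂ x| ≤
      (2 ^ ((d : ℝ) / 2)) ^ 2 * (d + 4) *
        (((t₂ - t₁) / t₁) ^ γ * heatKernel d (2 * t₁) x +
          ((t₂ - t₁) / t₂) ^ γ * heatKernel d (2 * t₂) x) := by
  have ht₂ : 0 < t₂ := by linarith
  have hK : (1 : ℝ) ≤ 2 ^ ((d : ℝ) / 2) := one_le_rpow one_le_two (by positivity)
  have hG₁ := heatKernel_nonneg (d := d) (x := x) (by positivity : 0 ≤ 2 * t₁)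
  have hG₂ := heatKernel_nonneg (d := d) (x := x) (by positivity : 0 ≤ 2 * t₂)
  have hr₂ : 0 ≤ (t₂ - t₁) / t₂ := div_nonneg (by linarith) ht₂.le
  have hr₂_le : (t₂ - t₁) / t₂ ≤ ((t₂ - t₁) / t₂) ^ γ :=
    self_le_rpow_of_le_one hr₂ (by rw [div_le_one ht₂]; linarith) hγ₁
  have hterm₁ : 0 ≤ ((t₂ - t₁) / t₁) ^ γ * heatKernel d (2 * t₁) x := by positivity
  rcases le_total t₂ (2 * t₁) with hnear | hfar
  · calc _ ≤ (2 ^ ((d : ℝ) / 2)) ^ 2 * (d + 4) * ((t₂ - t₁) / t₂) * heatKernel d (2 * t₂) x :=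
          abs_heatKernel_sub_le_of_le_two_mul ht₁ h₁₂ hnear
      _ ≤ (2 ^ ((d : ℝ) / 2)) ^ 2 * (d + 4) *
            (((t₂ - t₁) / t₁) ^ γ * heatKernel d (2 * t₁) x +
              ((t₂ - t₁) / t₂) ^ γ * heatKernel d (2 * t₂) x) := by
          rw [mul_assoc _ ((t₂ - t₁) / t₂)]
          gcongr
          nlinarith
  · have hr₁_ge : 1 ≤ ((t₂ - t₁) / t₁) ^ γ :=
      one_le_rpow (by rw [le_div_iff₀ ht₁]; linarith) hγ₀
    have hr₂_ge : 1 / 2 ≤ (t₂ - t₁) / t₂ := by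
      rw [div_le_div_iff₀ two_pos ht₂]; linarith
    calc _ ≤ 2 ^ ((d : ℝ) / 2) * (heatKernel d (2 * t₁) x + heatKernel d (2 * t₂) x) :=
          abs_heatKernel_sub_le_add ht₁ ht₂
      _ ≤ 2 ^ ((d : ℝ) / 2) * (2 * (((t₂ - t₁) / t₁) ^ γ * heatKernel d (2 * t₁) x +
            ((t₂ - t₁) / t₂) ^ γ * heatKernel d (2 * t₂) x)) := by
          gcongr
          nlinarith
      _ ≤ _ := by
          rw [← mul_assoc]
          gcongr
          · exact le_self_pow₀ hK two_ne_zero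
          · linarith [d.cast_nonneg (α := ℝ)]

end heatKernel

theorem gaussian_holder_time (d : ℕ) (g : ℝ → EuclideanSpace ℝ (Fin d) → ℝ)
    (hg : ∀ t x, g t x = (4 * π * t) ^ (-(d : ℝ) / 2) * Real.exp (-‖x‖ ^ 2 / (4 * t))) :
    ∀ T : ℝ, 0 < T → ∀ β : ℝ, β ∈ Set.Ioo (0 : ℝ) 1 →
      ∃ C > 0, ∀ t₁ t₂ : ℝ, 0 < t₁ → t₁ < t₂ → t₂ ≤ T → ∀ x : EuclideanSpace ℝ (Fin d),
        |g t₁ x - g t₂ x| ≤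
          C * |t₂ - t₁| ^ (β / 2) *
            (t₁ ^ (-β / 2) * g (2 * t₁) x + t₂ ^ (-β / 2) * g (2 * t₂) x) := by
  have hG : ∀ t x, g t x = heatKernel d t x := hg
  rintro - - β ⟨hβ₀, hβ₁⟩
  refine ⟨(2 ^ ((d : ℝ) / 2)) ^ 2 * (d + 4), by positivity, ?_⟩
  rintro t₁ t₂ ht₁ h₁₂ - x
  have hratio : ∀ t, 0 < t → ((t₂ - t₁) / t) ^ (β / 2) = |t₂ - t₁| ^ (β / 2) * t ^ (-β / 2) := by
    intro t ht
    rw [abs_of_pos (sub_pos.mpr h₁₂), div_rpow (by linarith) ht.le, neg_div, rpow_neg ht.le,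
      div_eq_mul_inv]
  simp only [hG]
  calc _ ≤ (2 ^ ((d : ℝ) / 2)) ^ 2 * (d + 4) *
          (((t₂ - t₁) / t₁) ^ (β / 2) * heatKernel d (2 * t₁) x +
            ((t₂ - t₁) / t₂) ^ (β / 2) * heatKernel d (2 * t₂) x) :=
        abs_heatKernel_sub_le_rpow (by linarith) (by linarith) ht₁ h₁₂.le
    _ = _ := by
        rw [hratio t₁ ht₁, hratio t₂ (by linarith)]
        ring
end

section
/- For s, t > 0 and v, x, y ∈ R^d, ∫_{R^d} g(s, z + v − y) g(t, x − z) dz ≤ 2^{d/2} e^{|v|²/(4s)} ∫_{R^d} g(2s, z − y) g(t, x − z) dz = 2^{d/2} e^{|v|²/(4s)} g(2s + t, x − y). -/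
open Real MeasureTheory

private lemma integrable_rexp_gauss {d : ℕ} {b : ℝ} (hb : 0 < b) :
    Integrable (fun z : EuclideanSpace ℝ (Fin d) => rexp (-(b * ‖z‖ ^ 2))) := by
  have h := (GaussianFourier.integrable_cexp_neg_mul_sq_norm_add
    (b := (b : ℂ)) (by simpa using hb) 0 (0 : EuclideanSpace ℝ (Fin d))).norm
  convert h using 2 with z
  rw [Complex.norm_exp]
  simp [← Complex.ofReal_pow, ← Complex.ofReal_mul, ← Complex.ofReal_neg]

private lemma gauss_sq_identity {d : ℕ} (a b : ℝ) (ha : 0 < a) (hb : 0 < b)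
    (u w z : EuclideanSpace ℝ (Fin d)) :
    ‖z + ((a / (a + b)) • (u - w)) + w - w‖ ^ 2 / (4 * a) +
      ‖u - (z + ((a / (a + b)) • (u - w)) + w)‖ ^ 2 / (4 * b) =
    (a + b) / (4 * a * b) * ‖z‖ ^ 2 + ‖u - w‖ ^ 2 / (4 * (a + b)) := by
  have hc : (0:ℝ) < a + b := by positivity
  have hs : a / (a + b) + b / (a + b) = 1 := by field_simp
  have hu : (a / (a+b)) • (u - w) + (b / (a+b)) • (u - w) = u - w := by
    rw [← add_smul, hs, one_smul]
  have h1 : z + ((a / (a + b)) • (u - w)) + w - w = z + (a / (a + b)) • (u - w) := by abel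
  have h2 : u - (z + ((a / (a + b)) • (u - w)) + w) = (b / (a + b)) • (u - w) - z := by
    nth_rewrite 1 [show u = (a / (a+b)) • (u - w) + (b / (a+b)) • (u - w) + w by
      rw [hu, sub_add_cancel]]
    abel
  rw [h1, h2, norm_add_sq_real, norm_sub_sq_real, real_inner_smul_right, real_inner_smul_left,
    real_inner_comm (u - w) z, norm_smul, norm_smul, mul_pow, mul_pow]
  simp only [Real.norm_eq_abs, sq_abs]
  generalize (inner ℝ z (u - w) : ℝ) = I
  generalize ‖u - w‖ = N
  generalize ‖z‖ = Z
  field_simp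
  ring

private lemma gauss_pointwise {d : ℕ} (a b : ℝ) (ha : 0 < a) (hb : 0 < b)
    (u w z : EuclideanSpace ℝ (Fin d)) :
    ((4*π*a) ^ (-(d:ℝ)/2) * rexp (-‖z - w‖^2 / (4*a))) *
      ((4*π*b) ^ (-(d:ℝ)/2) * rexp (-‖u - z‖^2 / (4*b))) =
    ((4*π*a) ^ (-(d:ℝ)/2) * (4*π*b) ^ (-(d:ℝ)/2) * rexp (-‖u - w‖^2 / (4*(a+b)))) *
      rexp (-((a+b)/(4*a*b) * ‖z - ((a/(a+b)) • (u - w) + w)‖^2)) := by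
  have hz : z - ((a/(a+b)) • (u - w) + w) + (a/(a+b)) • (u - w) + w = z := by abel
  have hid := gauss_sq_identity a b ha hb u w (z - ((a/(a+b)) • (u - w) + w))
  rw [hz] at hid
  rw [mul_mul_mul_comm, ← Real.exp_add]
  simp only [neg_div]
  rw [← neg_add, hid, neg_add, Real.exp_add]
  ring

private lemma gauss_prod_integrable {d : ℕ} (a b : ℝ) (ha : 0 < a) (hb : 0 < b)
    (u w : EuclideanSpace ℝ (Fin d)) :
    Integrable (fun z : EuclideanSpace ℝ (Fin d) =>
      ((4*π*a) ^ (-(d:ℝ)/2) * rexp (-‖z - w‖^2 / (4*a))) *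
      ((4*π*b) ^ (-(d:ℝ)/2) * rexp (-‖u - z‖^2 / (4*b)))) := by
  simp_rw [gauss_pointwise a b ha hb u w]
  have hk : (0:ℝ) < (a+b)/(4*a*b) := by positivity
  exact ((integrable_rexp_gauss hk).comp_sub_right ((a/(a+b)) • (u - w) + w)).const_mul _

private lemma gauss_conv {d : ℕ} (a b : ℝ) (ha : 0 < a) (hb : 0 < b)
    (u w : EuclideanSpace ℝ (Fin d)) :
    (∫ z : EuclideanSpace ℝ (Fin d),
      ((4*π*a) ^ (-(d:ℝ)/2) * rexp (-‖z - w‖^2 / (4*a))) *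
      ((4*π*b) ^ (-(d:ℝ)/2) * rexp (-‖u - z‖^2 / (4*b)))) =
    (4*π*(a+b)) ^ (-(d:ℝ)/2) * rexp (-‖u - w‖^2 / (4*(a+b))) := by
  have hc : (0:ℝ) < a + b := by positivity
  have hk : (0:ℝ) < (a+b)/(4*a*b) := by positivity
  have hpi := Real.pi_pos
  simp_rw [gauss_pointwise a b ha hb u w]
  rw [integral_const_mul,
    integral_sub_right_eq_self
      (fun z : EuclideanSpace ℝ (Fin d) => rexp (-((a+b)/(4*a*b) * ‖z‖^2)))
      ((a/(a+b)) • (u - w) + w)]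
  simp_rw [← neg_mul]
  rw [GaussianFourier.integral_rexp_neg_mul_sq_norm hk, finrank_euclideanSpace_fin]
  have hconst : (4*π*a) ^ (-(d:ℝ)/2) * (4*π*b) ^ (-(d:ℝ)/2) * (π / ((a+b)/(4*a*b))) ^ ((d:ℝ)/2)
      = (4*π*(a+b)) ^ (-(d:ℝ)/2) := by
    rw [show -(d:ℝ)/2 = -((d:ℝ)/2) by ring,
      Real.rpow_neg (by positivity), Real.rpow_neg (by positivity),
      Real.rpow_neg (by positivity),
      ← Real.inv_rpow (by positivity), ← Real.inv_rpow (by positivity),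
      ← Real.inv_rpow (by positivity),
      ← Real.mul_rpow (by positivity) (by positivity),
      ← Real.mul_rpow (by positivity) (by positivity)]
    congr 1
    field_simp
  rw [← hconst]
  ring

theorem gaussian_drift_convolution_bound (d : ℕ) (g : ℝ → EuclideanSpace ℝ (Fin d) → ℝ)
    (hg : ∀ t x, g t x = (4 * π * t) ^ (-(d : ℝ) / 2) * Real.exp (-‖x‖ ^ 2 / (4 * t))) :
    ∀ s t : ℝ, 0 < s → 0 < t → ∀ v x y : EuclideanSpace ℝ (Fin d),
      (∫ z : EuclideanSpace ℝ (Fin d), g s (z + v - y) * g t (x - z)) ≤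
        (2 : ℝ) ^ ((d : ℝ) / 2) * Real.exp (‖v‖ ^ 2 / (4 * s)) *
          ∫ z : EuclideanSpace ℝ (Fin d), g (2 * s) (z - y) * g t (x - z) ∧
      (∫ z : EuclideanSpace ℝ (Fin d), g (2 * s) (z - y) * g t (x - z)) =
        g (2 * s + t) (x - y) := by
  intro s t hs ht v x y
  have hpi := Real.pi_pos
  have h2s : (0:ℝ) < 2 * s := by linarith
  constructor
  · -- inequality
    have hpt : ∀ z : EuclideanSpace ℝ (Fin d),
        g s (z + v - y) * g t (x - z) ≤
        (2 : ℝ) ^ ((d : ℝ) / 2) * Real.exp (‖v‖ ^ 2 / (4 * s)) *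
          (g (2 * s) (z - y) * g t (x - z)) := by
      intro z
      rw [hg, hg, hg]
      rw [show (2 : ℝ) ^ ((d : ℝ) / 2) * Real.exp (‖v‖ ^ 2 / (4 * s)) *
          ((4 * π * (2*s)) ^ (-(d:ℝ)/2) * rexp (-‖z - y‖^2 / (4 * (2*s))) *
           ((4 * π * t) ^ (-(d:ℝ)/2) * rexp (-‖x - z‖^2 / (4 * t)))) =
          ((2 : ℝ) ^ ((d : ℝ) / 2) * (4 * π * (2*s)) ^ (-(d:ℝ)/2)) *
          (Real.exp (‖v‖ ^ 2 / (4 * s)) * rexp (-‖z - y‖^2 / (4 * (2*s)))) *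
          ((4 * π * t) ^ (-(d:ℝ)/2) * rexp (-‖x - z‖^2 / (4 * t))) from by ring]
      have hcoef : (2 : ℝ) ^ ((d : ℝ) / 2) * (4 * π * (2*s)) ^ (-(d:ℝ)/2)
          = (4 * π * s) ^ (-(d:ℝ)/2) := by
        rw [show 4 * π * (2*s) = 2 * (4 * π * s) by ring,
          Real.mul_rpow (by norm_num) (by positivity),
          show -(d:ℝ)/2 = -((d:ℝ)/2) by ring, Real.rpow_neg (by norm_num : (0:ℝ) ≤ 2)]
        rw [← mul_assoc, mul_inv_cancel₀ (by positivity), one_mul]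
      rw [hcoef]
      apply mul_le_mul_of_nonneg_right _ (by positivity)
      apply mul_le_mul_of_nonneg_left _ (by positivity)
      rw [← Real.exp_add, Real.exp_le_exp]
      have hW : ‖z - y‖ ≤ ‖z + v - y‖ + ‖v‖ := by
        have hzy : z - y = (z + v - y) - v := by abel
        rw [hzy]; exact norm_sub_le _ _
      set P := ‖z + v - y‖
      set V := ‖v‖
      set W := ‖z - y‖
      have hkey : W^2 ≤ 2*V^2 + 2*P^2 := by
        nlinarith [norm_nonneg (z - y), norm_nonneg (z + v - y), norm_nonneg v,
          sq_nonneg (P - V)]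
      have heq : V^2 / (4*s) + -W^2 / (4*(2*s)) - (-P^2 / (4*s))
          = (2*V^2 + 2*P^2 - W^2) / (8*s) := by
        field_simp
        ring
      have : (0:ℝ) ≤ (2*V^2 + 2*P^2 - W^2) / (8*s) :=
        div_nonneg (by linarith) (by linarith)
      linarith
    have hint : Integrable (fun z : EuclideanSpace ℝ (Fin d) =>
        (2 : ℝ) ^ ((d : ℝ) / 2) * Real.exp (‖v‖ ^ 2 / (4 * s)) *
          (g (2 * s) (z - y) * g t (x - z))) := by
      simp_rw [hg]
      exact (gauss_prod_integrable (2*s) t h2s ht x y).const_mul _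
    calc (∫ z : EuclideanSpace ℝ (Fin d), g s (z + v - y) * g t (x - z))
        ≤ ∫ z : EuclideanSpace ℝ (Fin d),
            (2 : ℝ) ^ ((d : ℝ) / 2) * Real.exp (‖v‖ ^ 2 / (4 * s)) *
              (g (2 * s) (z - y) * g t (x - z)) := by
          apply integral_mono_of_nonneg
          · filter_upwards with z
            rw [hg, hg]
            positivity
          · exact hint
          · filter_upwards with z using hpt z
      _ = (2 : ℝ) ^ ((d : ℝ) / 2) * Real.exp (‖v‖ ^ 2 / (4 * s)) *
            ∫ z : EuclideanSpace ℝ (Fin d), g (2 * s) (z - y) * g t (x - z) := by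
          rw [integral_const_mul]
  · -- Chapman–Kolmogorov equality
    simp_rw [hg]
    exact gauss_conv (2*s) t h2s ht x y
end

section
/- Generalized Gronwall lemma with singular kernel: let f : (0,T] → [0,∞) be bounded measurable, a ∈ [0, 1) and C > 0, and suppose f(t) ≤ C ∫₀^t (s^{−a} + 1) f(s) ds for all t ∈ (0,T]. Then f(t) = 0 for all t ∈ (0,T]. -/
/-!
Let `Φ` be a primitive of the kernel `k`, vanishing at `0`. Then `k Φⁿ` is the derivative of
`Φⁿ⁺¹ / (n + 1)`, so feeding a bound `f ≤ B (C Φ)ⁿ / n!` into the integral inequality returns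
`f ≤ B (C Φ)ⁿ⁺¹ / (n + 1)!`. These bounds tend to `0`. For the kernel `s ^ (-a) + 1` with `a < 1`
take `Φ s = s ^ (1 - a) / (1 - a) + s`.
-/

open Real MeasureTheory Set Filter Topology intervalIntegral Nat

section KernelPrimitive

variable {k Φ : ℝ → ℝ} {T : ℝ}

theorem HasDerivAt.pow_succ_div {s k' : ℝ} (h : HasDerivAt Φ k' s) (n : ℕ) :
    HasDerivAt (fun x => Φ x ^ (n + 1) / (n + 1)) (k' * Φ s ^ n) s :=
  ((h.pow (n + 1)).div_const ((n : ℝ) + 1)).congr_deriv (by push_cast; field_simp)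

theorem nonneg_of_hasDerivAt_nonneg (hΦc : ContinuousOn Φ (Icc 0 T)) (hΦ0 : Φ 0 = 0)
    (hΦ' : ∀ s ∈ Ioo 0 T, HasDerivAt Φ (k s) s) (hk : ∀ s ∈ Ioo 0 T, 0 ≤ k s)
    {t : ℝ} (ht : t ∈ Icc 0 T) : 0 ≤ Φ t := by
  have hmono : MonotoneOn Φ (Icc 0 T) :=
    monotoneOn_of_hasDerivWithinAt_nonneg (convex_Icc 0 T) hΦc
      (by simpa only [interior_Icc] using fun s hs => (hΦ' s hs).hasDerivWithinAt)
      (by simpa only [interior_Icc] using hk)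
  simpa only [hΦ0] using hmono ⟨le_rfl, ht.1.trans ht.2⟩ ht ht.1

theorem intervalIntegrable_mul_pow_and_integral_eq (hT : 0 ≤ T)
    (hΦc : ContinuousOn Φ (Icc 0 T)) (hΦ0 : Φ 0 = 0)
    (hΦ' : ∀ s ∈ Ioo 0 T, HasDerivAt Φ (k s) s) (hk : ∀ s ∈ Ioo 0 T, 0 ≤ k s) (n : ℕ) :
    IntervalIntegrable (fun s => k s * Φ s ^ n) volume 0 T ∧
      ∫ s in 0..T, k s * Φ s ^ n = Φ T ^ (n + 1) / (n + 1) := by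
  have hG' : ∀ s ∈ Ioo 0 T,
      HasDerivAt (fun x => Φ x ^ (n + 1) / (n + 1)) (k s * Φ s ^ n) s :=
    fun s hs => (hΦ' s hs).pow_succ_div n
  have hGc : ContinuousOn (fun x => Φ x ^ (n + 1) / (n + 1)) (Icc 0 T) :=
    (hΦc.pow _).div_const _
  have hint : IntervalIntegrable (fun s => k s * Φ s ^ n) volume 0 T :=
    (intervalIntegrable_iff_integrableOn_Ioc_of_le hT).2 <|
      integrableOn_deriv_of_nonneg hGc hG' fun s hs =>
        mul_nonneg (hk s hs) (pow_nonneg (nonneg_of_hasDerivAt_nonneg hΦc hΦ0 hΦ' hk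
          (Ioo_subset_Icc_self hs)) n)
  refine ⟨hint, ?_⟩
  rw [integral_eq_sub_of_hasDerivAt_of_le hT hGc hG' hint]
  simp [hΦ0]

variable {f : ℝ → ℝ} {B C : ℝ}

theorem le_pow_div_factorial_of_le_mul_integral (hC : 0 ≤ C)
    (hΦc : ContinuousOn Φ (Icc 0 T)) (hΦ0 : Φ 0 = 0)
    (hΦ' : ∀ s ∈ Ioo 0 T, HasDerivAt Φ (k s) s) (hk : ∀ s ∈ Ioc 0 T, 0 ≤ k s)
    (hf0 : ∀ t ∈ Ioc 0 T, 0 ≤ f t) (hfB : ∀ t ∈ Ioc 0 T, f t ≤ B)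
    (hineq : ∀ t ∈ Ioc 0 T, f t ≤ C * ∫ s in 0..t, k s * f s) (n : ℕ) :
    ∀ t ∈ Ioc 0 T, f t ≤ B * (C * Φ t) ^ n / n ! := by
  induction n with
  | zero => simpa using hfB
  | succ n ih =>
    intro t ht
    have hsub : Ioc 0 t ⊆ Ioc 0 T := Ioc_subset_Ioc_right ht.2
    obtain ⟨hint, hval⟩ := intervalIntegrable_mul_pow_and_integral_eq ht.1.le
      (hΦc.mono (Icc_subset_Icc_right ht.2)) hΦ0
      (fun s hs => hΦ' s ⟨hs.1, hs.2.trans_le ht.2⟩)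
      (fun s hs => hk s ⟨hs.1, hs.2.le.trans ht.2⟩) n
    have hbound : ∫ s in 0..t, k s * f s ≤ ∫ s in 0..t, B * C ^ n / n ! * (k s * Φ s ^ n) := by
      rw [integral_of_le ht.1.le, integral_of_le ht.1.le]
      -- if `k f` is not integrable its integral is `0`, so only the upper bound must be integrable
      refine integral_mono_of_nonneg ?_ (hint.1.const_mul _) ?_
      all_goals filter_upwards [ae_restrict_mem measurableSet_Ioc] with s hs
      · exact mul_nonneg (hk s (hsub hs)) (hf0 s (hsub hs))
      · calc k s * f s ≤ k s * (B * (C * Φ s) ^ n / n !) :=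
              mul_le_mul_of_nonneg_left (ih s (hsub hs)) (hk s (hsub hs))
          _ = B * C ^ n / n ! * (k s * Φ s ^ n) := by ring
    calc f t ≤ C * ∫ s in 0..t, k s * f s := hineq t ht
      _ ≤ C * (B * C ^ n / n ! * ∫ s in 0..t, k s * Φ s ^ n) :=
        mul_le_mul_of_nonneg_left (hbound.trans_eq (integral_const_mul _ _)) hC
      _ = B * (C * Φ t) ^ (n + 1) / (n + 1)! := by
        rw [hval, factorial_succ]
        push_cast
        field_simp
        ring

theorem eq_zero_of_le_mul_integral_kernel (hC : 0 ≤ C)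
    (hΦc : ContinuousOn Φ (Icc 0 T)) (hΦ0 : Φ 0 = 0)
    (hΦ' : ∀ s ∈ Ioo 0 T, HasDerivAt Φ (k s) s) (hk : ∀ s ∈ Ioc 0 T, 0 ≤ k s)
    (hf0 : ∀ t ∈ Ioc 0 T, 0 ≤ f t) (hfB : ∀ t ∈ Ioc 0 T, f t ≤ B)
    (hineq : ∀ t ∈ Ioc 0 T, f t ≤ C * ∫ s in 0..t, k s * f s) :
    ∀ t ∈ Ioc 0 T, f t = 0 := by
  intro t ht
  have hlim : Tendsto (fun n : ℕ => B * (C * Φ t) ^ n / n !) atTop (𝓝 0) := by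
    simpa [mul_div_assoc] using
      (FloorSemiring.tendsto_pow_div_factorial_atTop (C * Φ t)).const_mul B
  refine le_antisymm (ge_of_tendsto hlim (Eventually.of_forall fun n => ?_)) (hf0 t ht)
  exact le_pow_div_factorial_of_le_mul_integral hC hΦc hΦ0 hΦ' hk hf0 hfB hineq n t ht

end KernelPrimitive

theorem hasDerivAt_rpow_one_sub_div_add {a s : ℝ} (ha : a ≠ 1) (hs : s ≠ 0) :
    HasDerivAt (fun x => x ^ (1 - a) / (1 - a) + x) (s ^ (-a) + 1) s :=
  (((hasDerivAt_rpow_const (p := 1 - a) (Or.inl hs)).div_const (1 - a)).add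
    (hasDerivAt_id s)).congr_deriv
    (by rw [sub_sub_cancel_left, mul_div_cancel_left₀ _ (sub_ne_zero.2 (Ne.symm ha))])

theorem gronwall_singular_kernel_general (T a C : ℝ)
    (ha : a ∈ Set.Ico (0 : ℝ) 1) (hC : 0 < C)
    (f : ℝ → ℝ) (hfnn : ∀ t ∈ Set.Ioc (0 : ℝ) T, 0 ≤ f t)
    (hbdf : ∃ B : ℝ, ∀ t ∈ Set.Ioc (0 : ℝ) T, f t ≤ B)
    (hineq : ∀ t ∈ Set.Ioc (0 : ℝ) T,
      f t ≤ C * ∫ s in (0 : ℝ)..t, (s ^ (-a) + 1) * f s) :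
    ∀ t ∈ Set.Ioc (0 : ℝ) T, f t = 0 := by
  obtain ⟨B, hB⟩ := hbdf
  have h1a : 0 < 1 - a := sub_pos.2 ha.2
  have hΦc : Continuous fun s : ℝ => s ^ (1 - a) / (1 - a) + s :=
    ((continuous_rpow_const h1a.le).div_const _).add continuous_id
  exact eq_zero_of_le_mul_integral_kernel hC.le hΦc.continuousOn (by simp [zero_rpow h1a.ne'])
    (fun s hs => hasDerivAt_rpow_one_sub_div_add ha.2.ne hs.1.ne')
    (fun s hs => by have := hs.1; positivity) hfnn hB hineq

theorem gronwall_singular_kernel (T a C : ℝ) (hT : 0 < T)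
    (ha : a ∈ Set.Ico (0 : ℝ) 1) (hC : 0 < C)
    (f : ℝ → ℝ) (hfnn : ∀ t ∈ Set.Ioc (0 : ℝ) T, 0 ≤ f t)
    (hmeas : Measurable f) (hbdf : ∃ B : ℝ, ∀ t ∈ Set.Ioc (0 : ℝ) T, f t ≤ B)
    (hineq : ∀ t ∈ Set.Ioc (0 : ℝ) T,
      f t ≤ C * ∫ s in (0 : ℝ)..t, (s ^ (-a) + 1) * f s) :
    ∀ t ∈ Set.Ioc (0 : ℝ) T, f t = 0 :=
  gronwall_singular_kernel_general T a C ha hC f hfnn hbdf hineq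
end
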